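/- arXiv:1911.10765 — 2 statements merged into one kernel-verified Lean document; each statement's English description precedes it below -/
import Mathlib

section
/- Let S ∈ I₁ ∩ I₂, and let the shortest s–t path in G(S) have length 2(ℓ+1). Let Π = (B₁,A₁,…,A_ℓ,B_{ℓ+1}) be an augmenting set satisfying: B_{k} is in the span of S in M₁ for k ≥ 2, and there is no edge in G(S) from any a ∈ A_i to any b ∈ B_j when j > i+1. Then S − (A₁∪⋯∪A_ℓ) + (B₂∪⋯∪B_{ℓ+1}) ∈ I₁. -/
open Classical

noncomputable section

structure FinMatroid (α : Type*) where
  Indep : Finset α → Prop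
  empty_indep : Indep ∅
  subset_indep : ∀ ⦃A B : Finset α⦄, Indep A → B ⊆ A → Indep B
  exchange : ∀ ⦃A B : Finset α⦄, Indep A → Indep B → A.card < B.card →
    ∃ b ∈ B \ A, Indep (insert b A)

variable {α : Type*} [DecidableEq α]

/-- The rank of a set `T`: the maximum cardinality of an independent subset of `T`. -/
def FinMatroid.rank (M : FinMatroid α) (T : Finset α) : ℕ :=
  (T.powerset.filter fun A => M.Indep A).sup Finset.card

/-- Vertices of the exchange graph: a source `src`, a sink `snk`, and the ground elements. -/
inductive EGV (α : Type*) where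
  | src : EGV α
  | snk : EGV α
  | el : α → EGV α

/-- Arcs of the exchange graph `G(S)` for `S ∈ I₁ ∩ I₂`. -/
def egAdj (M₁ M₂ : FinMatroid α) (S : Finset α) : EGV α → EGV α → Prop
  | EGV.src, EGV.el b => b ∉ S ∧ M₁.Indep (insert b S)
  | EGV.el b, EGV.snk => b ∉ S ∧ M₂.Indep (insert b S)
  | EGV.el x, EGV.el y =>
      (x ∈ S ∧ y ∉ S ∧ M₁.Indep (insert y (S.erase x))) ∨
      (x ∉ S ∧ y ∈ S ∧ M₂.Indep (insert x (S.erase y)))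
  | _, _ => False

/-- Directed shortest-path distance in the exchange graph (number of arcs), `⊤` if unreachable. -/
def egDist (M₁ M₂ : FinMatroid α) (S : Finset α) (u v : EGV α) : ℕ∞ :=
  sInf {n : ℕ∞ | ∃ l : List (EGV α),
    List.Chain' (egAdj M₁ M₂ S) (u :: (l ++ [v])) ∧ n = (l.length : ℕ∞) + 1}

/-- An augmenting set `(B 1, A 1, B 2, …, A ℓ, B (ℓ+1))` of width `w` in the exchange graph
`G(S)`: pairwise disjoint sets with `A k ⊆ D_{2k}`, `B k ⊆ D_{2k-1}` (distance layers from the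
source), all of cardinality `w`, with `S + B₁ ∈ I₁`, `S + B_{ℓ+1} ∈ I₂`,
`S − A_k + B_{k+1} ∈ I₁` and `S − A_k + B_k ∈ I₂`. -/
def IsAugSet (M₁ M₂ : FinMatroid α) (S : Finset α) (ℓ w : ℕ)
    (A B : ℕ → Finset α) : Prop :=
  (∀ k ∈ Finset.Icc 1 ℓ, ∀ a ∈ A k,
      egDist M₁ M₂ S EGV.src (EGV.el a) = ((2 * k : ℕ) : ℕ∞)) ∧
  (∀ k ∈ Finset.Icc 1 (ℓ + 1), ∀ b ∈ B k,
      egDist M₁ M₂ S EGV.src (EGV.el b) = ((2 * k - 1 : ℕ) : ℕ∞)) ∧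
  (∀ i ∈ Finset.Icc 1 ℓ, ∀ j ∈ Finset.Icc 1 ℓ, i ≠ j → Disjoint (A i) (A j)) ∧
  (∀ i ∈ Finset.Icc 1 (ℓ + 1), ∀ j ∈ Finset.Icc 1 (ℓ + 1), i ≠ j → Disjoint (B i) (B j)) ∧
  (∀ i ∈ Finset.Icc 1 ℓ, ∀ j ∈ Finset.Icc 1 (ℓ + 1), Disjoint (A i) (B j)) ∧
  (∀ k ∈ Finset.Icc 1 ℓ, (A k).card = w) ∧
  (∀ k ∈ Finset.Icc 1 (ℓ + 1), (B k).card = w) ∧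
  M₁.Indep (S ∪ B 1) ∧
  M₂.Indep (S ∪ B (ℓ + 1)) ∧
  (∀ k ∈ Finset.Icc 1 ℓ, M₁.Indep ((S \ A k) ∪ B (k + 1))) ∧
  (∀ k ∈ Finset.Icc 1 ℓ, M₂.Indep ((S \ A k) ∪ B k))

/-! Write `T k = (S − A_k − ⋯ − A_ℓ) + (B_{k+1} + ⋯ + B_{ℓ+1})`, so that `T (ℓ+1) = S` and
`T 1` is the set in question; by downward induction each `T k` is independent in `M₁` with
`|S| ≤ |T k|`. Every arc of `G(S)` joins `S ∪ {s, t}` to the rest, so the parity of the distance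
from `s` puts every `A_k` inside `S` and every `B_j` outside it. An element `b ∈ B_j` with
`j ≥ k + 2` is spanned by `S`, and since `S − a + b` is dependent for all `a ∈ A_k`, its
fundamental circuit in `S + b` avoids `A_k`: `b` is spanned by `S − A_k`. Hence `T (k+1) − A_k`
is an independent subset of the closure of `S − A_k` of size at least `|S − A_k|`, a basis of that
closure, and it can replace `S − A_k` in the independent set `S − A_k + B_{k+1}`; the result is
`T k`. -/

namespace Matroid

variable {β : Type*} {M : Matroid β}

theorem Indep.mem_closure_sdiff_of_forall_not_indep {I A : Set β} {e : β} (hI : M.Indep I)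
    (he : e ∈ M.closure I) (heI : e ∉ I) (hA : ∀ a ∈ A, ¬ M.Indep (insert e (I \ {a}))) :
    e ∈ M.closure (I \ A) := by
  have hC := hI.fundCircuit_isCircuit he heI
  refine M.closure_subset_closure ?_ (hC.mem_closure_sdiff_singleton_of_mem (M.mem_fundCircuit e I))
  rintro x ⟨hxC, hxe : x ≠ e⟩
  have hxI : x ∈ I := (M.fundCircuit_subset_insert e I hxC).resolve_left hxe
  refine ⟨hxI, fun hxA => hA x hxA ?_⟩
  rw [Set.insert_sdiff_singleton_comm hxe.symm]
  exact (hI.mem_fundCircuit_iff he heI).1 hxC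

theorem Indep.union_indep_of_subset_closure {X Z B : Set β} (hXB : M.Indep (X ∪ B))
    (hXB_disj : Disjoint X B) (hXB_fin : (X ∪ B).Finite) (hZ : M.Indep Z)
    (hZX : Z ⊆ M.closure X) (hcard : X.encard ≤ Z.encard) : M.Indep (Z ∪ B) := by
  have hX := hXB.subset Set.subset_union_left
  have hZ_eq : Z.encard = X.encard := by
    refine le_antisymm ?_ hcard
    rw [← hZ.eRk_eq_encard, ← hX.eRk_eq_encard, ← M.eRk_closure_eq X]
    exact M.eRk_mono hZX
  have hZ_fin : Z.Finite := Set.encard_lt_top_iff.1 <|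
    hZ_eq ▸ (hXB_fin.subset Set.subset_union_left).encard_lt_top
  have hbasis : M.IsBasis Z (M.closure X) := hZ.isBasis_of_eRk_ge hZ_fin hZX <| by
    rw [eRk_closure_eq, hX.eRk_eq_encard, hZ.eRk_eq_encard, hZ_eq]
  refine (M.isRkFinite_of_finite (hZ_fin.union (hXB_fin.subset Set.subset_union_right)))
    |>.indep_of_encard_le_eRk ?_
  rw [hbasis.eRk_eq_eRk_union, eRk_union_closure_left_eq, hXB.eRk_eq_encard,
    Set.encard_union_eq hXB_disj, ← hZ_eq]
  exact Set.encard_union_le Z B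

end Matroid

open Finset

namespace Matroid

theorem Indep.sdiff_union_exchange {M : Matroid α} {S U V A B : Finset α}
    (hT : M.Indep ↑(S \ U ∪ V)) (hTcard : #S ≤ #(S \ U ∪ V)) (hAS : A ⊆ S)
    (hBS : Disjoint B S) (hBV : Disjoint B V) (hAB : #A ≤ #B)
    (hexch : M.Indep ↑(S \ A ∪ B)) (hV : (V : Set α) ⊆ M.closure ↑(S \ A)) :
    M.Indep ↑(S \ (A ∪ U) ∪ (B ∪ V)) ∧ #S ≤ #(S \ (A ∪ U) ∪ (B ∪ V)) := by
  set Z := S \ (A ∪ U) ∪ V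
  have hZT : Z ⊆ S \ U ∪ V :=
    union_subset_union_left (sdiff_subset_sdiff le_rfl subset_union_right)
  have hSA : #(S \ A) = #S - #A := card_sdiff_of_subset hAS
  have hZcard : #(S \ A) ≤ #Z := calc
    #(S \ A) = #S - #A := hSA
    _ ≤ #(S \ U ∪ V) - #A := Nat.sub_le_sub_right hTcard _
    _ ≤ #((S \ U ∪ V) \ A) := le_card_sdiff _ _
    _ ≤ #Z := card_le_card fun x => by simp only [Z, mem_sdiff, mem_union]; tauto
  have hZB : Disjoint Z B :=
    disjoint_union_left.2 ⟨(hBS.mono_right sdiff_subset).symm, hBV.symm⟩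
  rw [union_comm B, ← union_assoc]
  refine ⟨?_, ?_⟩
  · rw [coe_union] at hexch ⊢
    refine hexch.union_indep_of_subset_closure (disjoint_coe.2 (hBS.mono_right sdiff_subset).symm)
      (Set.toFinite _) (hT.subset (coe_subset.2 hZT)) ?_ ?_
    · rw [coe_union]
      exact Set.union_subset ((coe_subset.2 (sdiff_subset_sdiff le_rfl subset_union_left)).trans
        (M.subset_closure _ (hexch.subset Set.subset_union_left).subset_ground)) hV
    · simpa only [Set.encard_coe_eq_coe_finsetCard, Nat.cast_le] using hZcard
  · rw [card_union_of_disjoint hZB]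
    have := card_le_card hAS
    omega

theorem indep_sdiff_biUnion_union_biUnion {M : Matroid α} {S : Finset α} {ℓ : ℕ}
    {A B : ℕ → Finset α} (hS : M.Indep ↑S) (hAS : ∀ k ∈ Icc 1 ℓ, A k ⊆ S)
    (hBS : ∀ j ∈ Icc 1 (ℓ + 1), Disjoint (B j) S)
    (hBB : (↑(Icc 1 (ℓ + 1)) : Set ℕ).PairwiseDisjoint B)
    (hcard : ∀ k ∈ Icc 1 ℓ, #(A k) ≤ #(B (k + 1)))
    (hexch : ∀ k ∈ Icc 1 ℓ, M.Indep ↑(S \ A k ∪ B (k + 1)))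
    (hcl : ∀ k ∈ Icc 1 ℓ, ↑((Icc (k + 2) (ℓ + 1)).biUnion B) ⊆ M.closure ↑(S \ A k))
    {k : ℕ} (hk : 1 ≤ k) (hkℓ : k ≤ ℓ + 1) :
    M.Indep ↑(S \ (Icc k ℓ).biUnion A ∪ (Icc (k + 1) (ℓ + 1)).biUnion B) ∧
      #S ≤ #(S \ (Icc k ℓ).biUnion A ∪ (Icc (k + 1) (ℓ + 1)).biUnion B) := by
  induction hkℓ using Nat.decreasingInduction with
  | self => simpa using hS
  | of_succ k hkℓ ih =>
    have hk' : k ∈ Icc 1 ℓ := mem_Icc.2 ⟨hk, by omega⟩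
    rw [← insert_Icc_add_one_left_eq_Icc (by omega : k ≤ ℓ),
      ← insert_Icc_add_one_left_eq_Icc (by omega : k + 1 ≤ ℓ + 1), biUnion_insert,
      biUnion_insert]
    refine (ih (by omega)).1.sdiff_union_exchange (ih (by omega)).2 (hAS k hk')
      (hBS (k + 1) (mem_Icc.2 ⟨by omega, by omega⟩)) ?_ (hcard k hk') (hexch k hk') (hcl k hk')
    refine (disjoint_biUnion_right _ _ _).2 fun j hj => ?_
    rw [mem_Icc] at hj
    exact hBB (mem_Icc.2 ⟨by omega, by omega⟩) (mem_Icc.2 ⟨by omega, hj.2⟩) (by omega)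

end Matroid

theorem List.IsChain.iff_iff_odd_length {β : Type*} {R : β → β → Prop} {p : β → Prop}
    (hR : ∀ ⦃u v⦄, R u v → (p v ↔ ¬ p u)) {u v : β} {l : List β}
    (h : List.IsChain R (u :: (l ++ [v]))) : (p v ↔ p u) ↔ Odd l.length := by
  induction l generalizing u with
  | nil =>
    have := hR (List.isChain_cons_cons.1 h).1
    simp only [List.length_nil, Nat.not_odd_zero, iff_false]
    tauto
  | cons x l ih =>
    obtain ⟨hux, hx⟩ := List.isChain_cons_cons.1 h
    rw [List.length_cons, Nat.odd_add_one, ← ih hx, hR hux]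
    tauto

namespace FinMatroid

def toMatroid {β : Type*} (M : FinMatroid β) : Matroid β :=
  (IndepMatroid.ofFinset Set.univ M.Indep M.empty_indep (fun _ _ hJ hIJ => M.subset_indep hJ hIJ)
    (fun _ _ hI hJ hIJ => by
      obtain ⟨e, he, hIe⟩ := M.exchange hI hJ hIJ
      exact ⟨e, (mem_sdiff.1 he).1, (mem_sdiff.1 he).2, hIe⟩)
    fun _ _ => Set.subset_univ _).matroid

@[simp] theorem toMatroid_indep_coe {β : Type*} {M : FinMatroid β} {I : Finset β} :
    M.toMatroid.Indep ↑I ↔ M.Indep I := by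
  simp [toMatroid]

theorem subset_closure_of_rank_union_eq {M : FinMatroid α} {S B : Finset α} (hS : M.Indep S)
    (h : M.rank (S ∪ B) = M.rank S) : (B : Set α) ⊆ M.toMatroid.closure ↑S := by
  intro b hb
  by_cases hbS : b ∈ S
  · exact M.toMatroid.mem_closure_of_mem hbS (Set.subset_univ _)
  by_contra hcl
  have hind : M.Indep (insert b S) := by
    rw [← toMatroid_indep_coe, coe_insert,
      (toMatroid_indep_coe.2 hS).insert_indep_iff_of_notMem hbS]
    exact ⟨Set.mem_univ b, hcl⟩
  have hlow : #(insert b S) ≤ M.rank (S ∪ B) := le_sup <|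
    mem_filter.2 ⟨mem_powerset.2 (insert_subset (mem_union_right S hb) subset_union_left), hind⟩
  have hup : M.rank S ≤ #S :=
    Finset.sup_le fun _ hI => card_le_card (mem_powerset.1 (mem_filter.1 hI).1)
  rw [card_insert_of_notMem hbS, h] at hlow
  omega

theorem subset_closure_sdiff_of_forall_not_indep {M : FinMatroid α} {S A B : Finset α}
    (hS : M.Indep S) (hspan : M.rank (S ∪ B) = M.rank S) (hBS : Disjoint B S)
    (hAB : ∀ a ∈ A, ∀ b ∈ B, ¬ M.Indep (insert b (S.erase a))) :
    (B : Set α) ⊆ M.toMatroid.closure ↑(S \ A) := fun b hb => by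
  rw [coe_sdiff]
  refine (toMatroid_indep_coe.2 hS).mem_closure_sdiff_of_forall_not_indep
    (subset_closure_of_rank_union_eq hS hspan hb) (disjoint_left.1 hBS hb) fun a ha => ?_
  rw [← coe_erase, ← coe_insert, toMatroid_indep_coe]
  exact hAB a ha b hb

end FinMatroid

def egSide (S : Finset α) : EGV α → Prop
  | .el x => x ∈ S
  | _ => True

section ExchangeGraph

variable {M₁ M₂ : FinMatroid α} {S : Finset α}

theorem egSide_iff_of_egAdj {u v : EGV α} (h : egAdj M₁ M₂ S u v) :
    egSide S v ↔ ¬ egSide S u := by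
  cases u <;> cases v <;> simp only [egAdj, egSide] at h ⊢ <;> tauto

theorem exists_isChain_of_egDist_eq {u v : EGV α} {m : ℕ} (h : egDist M₁ M₂ S u v = m) :
    ∃ l : List (EGV α),
      List.IsChain (egAdj M₁ M₂ S) (u :: (l ++ [v])) ∧ l.length + 1 = m := by
  unfold egDist at h
  obtain ⟨l, hl, hlm⟩ := h ▸ csInf_mem (Set.nonempty_iff_ne_empty.2 fun hempty => by
    simp [hempty] at h)
  exact ⟨l, hl, by exact_mod_cast hlm.symm⟩

theorem mem_iff_even_of_egDist_src_eq {a : α} {m : ℕ}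
    (h : egDist M₁ M₂ S .src (.el a) = m) : a ∈ S ↔ Even m := by
  obtain ⟨l, hl, rfl⟩ := exists_isChain_of_egDist_eq h
  have := hl.iff_iff_odd_length (p := egSide S) fun _ _ => egSide_iff_of_egAdj
  simp only [egSide, iff_true] at this
  rw [this, Nat.even_add_one, Nat.not_even_iff_odd]

variable {ℓ w : ℕ} {A B : ℕ → Finset α}

theorem IsAugSet.A_subset (h : IsAugSet M₁ M₂ S ℓ w A B) : ∀ k ∈ Icc 1 ℓ, A k ⊆ S :=
  fun k hk a ha => (mem_iff_even_of_egDist_src_eq (h.1 k hk a ha)).2 (even_two_mul k)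

theorem IsAugSet.disjoint_B (h : IsAugSet M₁ M₂ S ℓ w A B) :
    ∀ j ∈ Icc 1 (ℓ + 1), Disjoint (B j) S := fun j hj =>
  disjoint_left.2 fun b hb hbS => by
    obtain ⟨r, hr⟩ := (mem_iff_even_of_egDist_src_eq (h.2.1 j hj b hb)).1 hbS
    have := (mem_Icc.1 hj).1
    omega

end ExchangeGraph

theorem augset_minus_B1_general (M₁ M₂ : FinMatroid α) (S : Finset α) (ℓ w : ℕ)
    (A B : ℕ → Finset α)
    (hS₁ : M₁.Indep S)
    (hAug : IsAugSet M₁ M₂ S ℓ w A B)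
    (hspan : ∀ k ∈ Finset.Icc 2 (ℓ + 1), M₁.rank (S ∪ B k) = M₁.rank S)
    (hnoedge : ∀ i ∈ Finset.Icc 1 ℓ, ∀ j ∈ Finset.Icc 1 (ℓ + 1), i + 1 < j →
      ∀ a ∈ A i, ∀ b ∈ B j, ¬ M₁.Indep (insert b (S.erase a))) :
    M₁.Indep ((S \ (Finset.Icc 1 ℓ).biUnion A) ∪ (Finset.Icc 2 (ℓ + 1)).biUnion B) := by
  have hAS := hAug.A_subset
  have hBS := hAug.disjoint_B
  obtain ⟨-, -, -, hBB, -, hcA, hcB, -, -, hexch, -⟩ := hAug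
  have hcard : ∀ k ∈ Icc 1 ℓ, #(A k) ≤ #(B (k + 1)) := fun k hk => by
    have := mem_Icc.1 hk
    rw [hcA k hk, hcB (k + 1) (mem_Icc.2 ⟨by omega, by omega⟩)]
  have hcl : ∀ k ∈ Icc 1 ℓ,
      ↑((Icc (k + 2) (ℓ + 1)).biUnion B) ⊆ M₁.toMatroid.closure ↑(S \ A k) := by
    intro k hk
    rw [coe_biUnion]
    refine Set.iUnion₂_subset fun j hj => ?_
    have hj' := mem_Icc.1 hj
    have hjI : j ∈ Icc 1 (ℓ + 1) := mem_Icc.2 ⟨by omega, hj'.2⟩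
    exact FinMatroid.subset_closure_sdiff_of_forall_not_indep hS₁
      (hspan j (mem_Icc.2 ⟨by omega, hj'.2⟩)) (hBS j hjI) (hnoedge k hk j hjI (by omega))
  refine FinMatroid.toMatroid_indep_coe.1 (Matroid.indep_sdiff_biUnion_union_biUnion
    (FinMatroid.toMatroid_indep_coe.2 hS₁) hAS hBS (fun i hi j hj hij => hBB i hi j hj hij) hcard
    (fun k hk => FinMatroid.toMatroid_indep_coe.2 (hexch k hk)) hcl le_rfl (by omega)).1

/-- Key lemma towards Theorem (augmenting sets preserve independence): given an augmenting set
`Π = (B₁, A₁, …, A_ℓ, B_{ℓ+1})` in `G(S)` with shortest `s`–`t` distance `2(ℓ+1)`, such that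
each `B_k` (`k ≥ 2`) lies in the span of `S` in `M₁` and there is no edge of `G(S)` from any
`a ∈ A_i` to any `b ∈ B_j` for `j > i + 1`, we have
`S − (A₁ ∪ ⋯ ∪ A_ℓ) + (B₂ ∪ ⋯ ∪ B_{ℓ+1}) ∈ I₁`. -/
theorem augset_minus_B1 (M₁ M₂ : FinMatroid α) (S : Finset α) (ℓ w : ℕ)
    (A B : ℕ → Finset α)
    (hS₁ : M₁.Indep S) (hS₂ : M₂.Indep S)
    (hdist : egDist M₁ M₂ S EGV.src EGV.snk = ((2 * (ℓ + 1) : ℕ) : ℕ∞))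
    (hAug : IsAugSet M₁ M₂ S ℓ w A B)
    (hspan : ∀ k ∈ Finset.Icc 2 (ℓ + 1), M₁.rank (S ∪ B k) = M₁.rank S)
    (hnoedge : ∀ i ∈ Finset.Icc 1 ℓ, ∀ j ∈ Finset.Icc 1 (ℓ + 1), i + 1 < j →
      ∀ a ∈ A i, ∀ b ∈ B j, ¬ M₁.Indep (insert b (S.erase a))) :
    M₁.Indep ((S \ (Finset.Icc 1 ℓ).biUnion A) ∪ (Finset.Icc 2 (ℓ + 1)).biUnion B) :=
  augset_minus_B1_general M₁ M₂ S ℓ w A B hS₁ hAug hspan hnoedge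
end
end

section
/- Let M = (V, I₁) be a matroid (the first matroid), S ∈ I₁, and suppose S − A_k + B_{k+1} ∈ I₁ and S − A'_k + B'_{k+1} ∈ I₁ where A'_k ⊆ A_k, B'_{k+1} ⊆ B_{k+1}, and |A'_k| = |B'_{k+1}|. Then for any T ⊆ B_{k+1} with B'_{k+1} ⊆ T and S − A_k + T ∈ I₁ and |T| ≤ |A_k|, there exists A'' with A'_k ⊆ A'' ⊆ A_k, |A''| = |T|, and S − A'' + T ∈ I₁. -/
open Classical

noncomputable section

variable {α : Type*} [DecidableEq α]

theorem FinMatroid.exchange' (M : FinMatroid α) ⦃A B : Finset α⦄ (hA : M.Indep A)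
    (hB : M.Indep B) (h : A.card < B.card) :
    ∃ b ∈ B \ A, M.Indep (insert b A) := by
  have e : (fun a b => propDecidable (a = b)) = (inferInstance : DecidableEq α) :=
    Subsingleton.elim _ _
  have h' := M.exchange hA hB h
  rwa [e] at h'

/-- Key exchange step for converting partial augmenting sets to augmenting sets:
given `S − A + B ∈ I`, `A' ⊆ A`, `B' ⊆ B` with `|A'| = |B'|` and `S − A' + B' ∈ I`, then for
any `T` with `B' ⊆ T ⊆ B`, `S − A + T ∈ I` and `|T| ≤ |A|`, there is `A''` with
`A' ⊆ A'' ⊆ A`, `|A''| = |T|` and `S − A'' + T ∈ I`. -/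
theorem partial_to_full_step (M : FinMatroid α) (S A B A' B' : Finset α)
    (hS : M.Indep S) (hA : A ⊆ S) (hB : Disjoint B S)
    (h1 : M.Indep ((S \ A) ∪ B))
    (hA' : A' ⊆ A) (hB' : B' ⊆ B) (hcard : A'.card = B'.card)
    (h2 : M.Indep ((S \ A') ∪ B')) :
    ∀ T : Finset α, B' ⊆ T → T ⊆ B → M.Indep ((S \ A) ∪ T) → T.card ≤ A.card →
      ∃ A'' : Finset α, A' ⊆ A'' ∧ A'' ⊆ A ∧ A''.card = T.card ∧
        M.Indep ((S \ A'') ∪ T) := by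
  intro T hB'T hTB hindT hTA
  have hTS : Disjoint T S := hB.mono_left hTB
  have hB'S : Disjoint B' S := hB.mono_left hB'
  -- cardinality of the big independent set J = (S \ A') ∪ B'
  have hJcard : ((S \ A') ∪ B').card = S.card := by
    have hdisj : Disjoint (S \ A') B' := (hB'S.mono_right (Finset.sdiff_subset)).symm
    rw [Finset.card_union_of_disjoint hdisj, Finset.card_sdiff_of_subset (hA'.trans hA), ← hcard]
    have := Finset.card_le_card (hA'.trans hA)
    omega
  -- grow (S \ A) ∪ T ∪ C by exchange until it has card S.card
  have key : ∀ n (C : Finset α), C ⊆ A \ A' → M.Indep ((S \ A) ∪ T ∪ C) →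
      ((S \ A) ∪ T ∪ C).card + n = S.card →
      ∃ C', C ⊆ C' ∧ C' ⊆ A \ A' ∧ M.Indep ((S \ A) ∪ T ∪ C') ∧
        ((S \ A) ∪ T ∪ C').card = S.card := by
    intro n
    induction n with
    | zero => intro C hC hind hcard'; exact ⟨C, le_refl _, hC, hind, by omega⟩
    | succ n ih =>
      intro C hC hind hcard'
      have hlt : ((S \ A) ∪ T ∪ C).card < ((S \ A') ∪ B').card := by omega
      obtain ⟨b, hbmem, hbind⟩ := M.exchange' hind h2 hlt
      obtain ⟨hbJ, hbX⟩ := Finset.mem_sdiff.1 hbmem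
      have hbAA' : b ∈ A \ A' := by
        rcases Finset.mem_union.1 hbJ with hb | hb
        · obtain ⟨hbS, hbA'⟩ := Finset.mem_sdiff.1 hb
          refine Finset.mem_sdiff.2 ⟨?_, hbA'⟩
          by_contra hbA
          exact hbX (Finset.mem_union.2 (Or.inl (Finset.mem_union.2 (Or.inl
            (Finset.mem_sdiff.2 ⟨hbS, hbA⟩)))))
        · exact absurd (Finset.mem_union.2 (Or.inl (Finset.mem_union.2 (Or.inr (hB'T hb)))))
            hbX
      have hbind' : M.Indep ((S \ A) ∪ T ∪ insert b C) := by
        refine M.subset_indep hbind ?_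
        intro x hx
        rcases Finset.mem_union.1 hx with h | h
        · exact Finset.mem_insert_of_mem (Finset.mem_union.2 (Or.inl h))
        · rcases Finset.mem_insert.1 h with h | h
          · exact h ▸ Finset.mem_insert_self _ _
          · exact Finset.mem_insert_of_mem (Finset.mem_union.2 (Or.inr h))
      have heq : (S \ A) ∪ T ∪ insert b C = insert b ((S \ A) ∪ T ∪ C) := by
        ext x
        simp only [Finset.mem_insert, Finset.mem_union]
        tauto
      have hcardeq : ((S \ A) ∪ T ∪ insert b C).card + n = S.card := by
        rw [heq, Finset.card_insert_of_notMem hbX]; omega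
      obtain ⟨C', hCC', hC'sub, hC'ind, hC'card⟩ := ih (insert b C)
        (Finset.insert_subset hbAA' hC) hbind' hcardeq
      exact ⟨C', (Finset.subset_insert _ _).trans hCC', hC'sub, hC'ind, hC'card⟩
  -- base set X₀ = (S \ A) ∪ T ∪ ∅
  have hdisjST : Disjoint (S \ A) T := (hTS.mono_right (Finset.sdiff_subset)).symm
  have hX0card : ((S \ A) ∪ T).card = S.card - A.card + T.card := by
    rw [Finset.card_union_of_disjoint hdisjST, Finset.card_sdiff_of_subset hA]
  have hAcard : A.card ≤ S.card := Finset.card_le_card hA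
  have hind0 : M.Indep ((S \ A) ∪ T ∪ (∅ : Finset α)) := by
    rwa [Finset.union_empty]
  obtain ⟨C', hC0, hC'sub, hC'ind, hC'card⟩ := key (S.card - ((S \ A) ∪ T).card) ∅
    (Finset.empty_subset _) hind0 (by rw [Finset.union_empty]; omega)
  -- properties of C'
  have hC'A : C' ⊆ A := hC'sub.trans Finset.sdiff_subset
  have hC'S : C' ⊆ S := hC'A.trans hA
  have hdisjC'sdiff : Disjoint (S \ A) C' := Finset.sdiff_disjoint.mono_right hC'A
  have hdisjTC' : Disjoint T C' := hTS.mono_right hC'S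
  have hXcard : ((S \ A) ∪ T ∪ C').card = S.card - A.card + T.card + C'.card := by
    rw [Finset.card_union_of_disjoint (Finset.disjoint_union_left.2 ⟨hdisjC'sdiff, hdisjTC'⟩),
      hX0card]
  have hC'cardval : C'.card = A.card - T.card := by omega
  refine ⟨A \ C', ?_, Finset.sdiff_subset, ?_, ?_⟩
  · intro a ha
    rw [Finset.mem_sdiff]
    refine ⟨hA' ha, fun hcon => ?_⟩
    have := hC'sub hcon
    rw [Finset.mem_sdiff] at this
    exact this.2 ha
  · rw [Finset.card_sdiff_of_subset (hC'sub.trans Finset.sdiff_subset)]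
    omega
  · have heq2 : S \ (A \ C') ∪ T = (S \ A) ∪ T ∪ C' := by
      ext x
      simp only [Finset.mem_union, Finset.mem_sdiff]
      constructor
      · rintro (⟨hxS, hx⟩ | hxT)
        · by_cases hxA : x ∈ A
          · exact Or.inr (by_contra fun hxC => hx ⟨hxA, fun h => hxC h⟩)
          · exact Or.inl (Or.inl ⟨hxS, hxA⟩)
        · exact Or.inl (Or.inr hxT)
      · rintro ((⟨hxS, hxA⟩ | hxT) | hxC)
        · exact Or.inl ⟨hxS, fun h => hxA h.1⟩
        · exact Or.inr hxT
        · exact Or.inl ⟨hC'S hxC, fun h => h.2 hxC⟩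
    rw [heq2]
    exact hC'ind
end
end
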